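/- arXiv:1405.0149 — 3 statements merged into one kernel-verified Lean document; each statement's English description precedes it below -/
import Mathlib

section
/- Let q be a prime power, n a positive integer, and C2 ⊆ C1 ⊆ F_q^n nested F_q-linear codes. For any subset J of {1,…,n} with complement J̄, the following are equivalent: (i) dim P̃_J(ker P̃_J̄) = dim C1 − dim C2; (ii) both dim P_J(C1) + dim C2 = dim P_J(C2) + dim C1 (i.e., dim P_J(C1) − dim P_J(C2) = dim C1 − dim C2) and dim P_J̄(C1) = dim P_J̄(C2). -/
set_option autoImplicit false

open Submodule Module

variable {F : Type*} [Field F] [Fintype F] {n : ℕ}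

/-- `P_J`: the projection onto the coordinates in `J`. -/
noncomputable def proj (J : Finset (Fin n)) : (Fin n → F) →ₗ[F] (J → F) :=
  LinearMap.funLeft F F (fun j => (j : Fin n))

/-- `P̃_J : C1/C2 → P_J(C1)/P_J(C2)`, the induced map sending `x + C2` to `P_J(x) + P_J(C2)`. -/
noncomputable def ptilde (C1 C2 : Submodule F (Fin n → F)) (J : Finset (Fin n)) :
    (↥C1 ⧸ C2.comap C1.subtype) →ₗ[F]
      (↥(C1.map (proj J)) ⧸ (C2.map (proj J)).comap (C1.map (proj J)).subtype) :=
  Submodule.mapQ _ _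
    (LinearMap.codRestrict (C1.map (proj J)) ((proj J).comp C1.subtype)
      (fun x => Submodule.mem_map_of_mem x.2))
    (fun _ hx => Submodule.mem_map_of_mem hx)

/-! Both `P̃_J` and `P̃_J̄` are surjections out of `C1/C2`, so
`dim P̃_J(ker P̃_J̄) ≤ dim ker P̃_J̄ ≤ dim C1/C2`. Equality throughout means that `P̃_J̄` vanishes,
i.e. its target `P_J̄(C1)/P_J̄(C2)` is zero, and that `P̃_J` is a bijection onto
`P_J(C1)/P_J(C2)`; counting dimensions of the three quotients turns this into (ii). -/

omit [Fintype F] in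
lemma ptilde_surjective (C1 C2 : Submodule F (Fin n → F)) (J : Finset (Fin n)) :
    Function.Surjective (ptilde C1 C2 J) := by
  intro y
  obtain ⟨⟨_, x, hx, rfl⟩, rfl⟩ := Submodule.Quotient.mk_surjective _ y
  exact ⟨Submodule.Quotient.mk ⟨x, hx⟩, rfl⟩

section

variable {K V W₁ W₂ : Type*} [DivisionRing K] [AddCommGroup V] [Module K V]
  [AddCommGroup W₁] [Module K W₁] [AddCommGroup W₂] [Module K W₂]

theorem Submodule.finrank_quotient_comap_subtype_add_finrank [FiniteDimensional K V]
    {p q : Submodule K V} (hpq : p ≤ q) :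
    finrank K (q ⧸ p.comap q.subtype) + finrank K p = finrank K q := by
  rw [← (comapSubtypeEquivOfLe hpq).finrank_eq]
  exact finrank_quotient_add_finrank _

theorem LinearMap.finrank_map_ker_eq_finrank_iff [FiniteDimensional K V]
    {f : V →ₗ[K] W₁} {g : V →ₗ[K] W₂} (hf : Function.Surjective f)
    (hg : Function.Surjective g) :
    finrank K ((ker g).map f) = finrank K V ↔ finrank K W₁ = finrank K V ∧ finrank K W₂ = 0 := by
  have rank_nullity : finrank K W₂ + finrank K (ker g) = finrank K V := by
    rw [← finrank_top K W₂, ← range_eq_top.2 hg, finrank_range_add_finrank_ker]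
  have ker_eq_top_iff : ker g = ⊤ ↔ finrank K W₂ = 0 := by
    rw [eq_top_iff_finrank_eq]
    omega
  have map_top_eq : (⊤ : Submodule K V).map f = ⊤ := by rw [Submodule.map_top, range_eq_top.2 hf]
  constructor
  · intro h
    have hker : ker g = ⊤ :=
      eq_top_of_finrank_eq (le_antisymm (finrank_le _) (h ▸ finrank_map_le f _))
    rw [hker, map_top_eq, finrank_top] at h
    exact ⟨h, ker_eq_top_iff.1 hker⟩
  · rintro ⟨h₁, h₂⟩
    rw [ker_eq_top_iff.2 h₂, map_top_eq, finrank_top, h₁]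

end

theorem quantum_ramp_qualified_iff_general (C1 C2 : Submodule F (Fin n → F))
    (h : C2 ≤ C1) (J : Finset (Fin n)) :
    Module.finrank F ↥((LinearMap.ker (ptilde C1 C2 Jᶜ)).map (ptilde C1 C2 J))
        + Module.finrank F ↥C2 = Module.finrank F ↥C1
      ↔ (Module.finrank F ↥(C1.map (proj J)) + Module.finrank F ↥C2
            = Module.finrank F ↥(C2.map (proj J)) + Module.finrank F ↥C1
          ∧ Module.finrank F ↥(C1.map (proj Jᶜ)) = Module.finrank F ↥(C2.map (proj Jᶜ))) := by
  have hC := finrank_quotient_comap_subtype_add_finrank h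
  have hJ := finrank_quotient_comap_subtype_add_finrank (map_mono (f := proj J) h)
  have hJc := finrank_quotient_comap_subtype_add_finrank (map_mono (f := proj Jᶜ) h)
  have key := LinearMap.finrank_map_ker_eq_finrank_iff
    (ptilde_surjective C1 C2 J) (ptilde_surjective C1 C2 Jᶜ)
  omega

/-- For nested codes `C2 ⊆ C1 ⊆ F_q^n` and `J ⊆ {1,…,n}` with complement `J̄`:
`dim P̃_J(ker P̃_J̄) = dim C1 − dim C2` iff both
`dim P_J(C1) − dim P_J(C2) = dim C1 − dim C2` and `dim P_J̄(C1) = dim P_J̄(C2)`. -/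
theorem quantum_ramp_qualified_iff (hn : 0 < n) (C1 C2 : Submodule F (Fin n → F))
    (h : C2 ≤ C1) (J : Finset (Fin n)) :
    Module.finrank F ↥((LinearMap.ker (ptilde C1 C2 Jᶜ)).map (ptilde C1 C2 J))
        + Module.finrank F ↥C2 = Module.finrank F ↥C1
      ↔ (Module.finrank F ↥(C1.map (proj J)) + Module.finrank F ↥C2
            = Module.finrank F ↥(C2.map (proj J)) + Module.finrank F ↥C1
          ∧ Module.finrank F ↥(C1.map (proj Jᶜ)) = Module.finrank F ↥(C2.map (proj Jᶜ))) :=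
  quantum_ramp_qualified_iff_general C1 C2 h J
end

section
/- Let q be a prime power, n a positive integer, and C2 ⊆ D ⊆ C1 ⊆ F_q^n nested F_q-linear codes, and let J ⊆ {1,…,n} with complement J̄. Define D' = C2 + (D ∩ ker P_J̄). Then dim P_J(D) + dim P_J̄(D') ≤ dim P_J(D') + dim P_J̄(D); that is, replacing D by D' does not decrease the quantity dim P_J(D) − dim P_J̄(D). -/
/-! Rank–nullity gives `dim P_J(X) = dim X − dim (X ∩ ker P_J)`, so the claim becomes
`dim (D' ∩ ker P_J) + dim (D ∩ ker P_J̄) ≤ dim (D ∩ ker P_J) + dim (D' ∩ ker P_J̄)`.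
This holds termwise: `D' ≤ D`, and `D' ⊇ D ∩ ker P_J̄` forces `D' ∩ ker P_J̄ = D ∩ ker P_J̄`. -/

set_option autoImplicit false

open Submodule Module

variable {F : Type*} [Field F] [Fintype F] {n : ℕ}

section

variable {K V W₁ W₂ : Type*} [DivisionRing K] [AddCommGroup V] [Module K V]
  [AddCommGroup W₁] [Module K W₁] [AddCommGroup W₂] [Module K W₂] [FiniteDimensional K V]

theorem Submodule.finrank_map_add_finrank_inf_ker (f : V →ₗ[K] W₁) (p : Submodule K V) :
    finrank K (p.map f) + finrank K ↥(p ⊓ LinearMap.ker f) = finrank K p := by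
  have h := LinearMap.finrank_range_add_finrank_ker (f ∘ₗ p.subtype)
  rw [LinearMap.range_comp, Submodule.range_subtype, LinearMap.ker_comp] at h
  rwa [← Submodule.finrank_map_subtype_eq, Submodule.map_comap_subtype] at h

theorem Submodule.finrank_map_add_finrank_map_le {p q : Submodule K V} (f : V →ₗ[K] W₁)
    (g : V →ₗ[K] W₂) (hpq : p ≤ q) (hker : q ⊓ LinearMap.ker g ≤ p) :
    finrank K (q.map f) + finrank K (p.map g) ≤ finrank K (p.map f) + finrank K (q.map g) := by
  have hf_p := p.finrank_map_add_finrank_inf_ker f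
  have hf_q := q.finrank_map_add_finrank_inf_ker f
  have hg_p := p.finrank_map_add_finrank_inf_ker g
  have hg_q := q.finrank_map_add_finrank_inf_ker g
  have hf_ker : finrank K ↥(p ⊓ LinearMap.ker f) ≤ finrank K ↥(q ⊓ LinearMap.ker f) :=
    Submodule.finrank_mono (inf_le_inf_right _ hpq)
  have hg_ker : finrank K ↥(q ⊓ LinearMap.ker g) ≤ finrank K ↥(p ⊓ LinearMap.ker g) :=
    Submodule.finrank_mono (le_inf hker inf_le_right)
  have hdim : finrank K p ≤ finrank K q := Submodule.finrank_mono hpq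
  omega

end

theorem replace_D_does_not_decrease_general (C2 D : Submodule F (Fin n → F))
    (h2 : C2 ≤ D) (J : Finset (Fin n)) :
    Module.finrank F ↥(D.map (proj J))
        + Module.finrank F ↥((C2 ⊔ (D ⊓ LinearMap.ker (proj Jᶜ))).map (proj Jᶜ))
      ≤ Module.finrank F ↥((C2 ⊔ (D ⊓ LinearMap.ker (proj Jᶜ))).map (proj J))
        + Module.finrank F ↥(D.map (proj Jᶜ)) :=
  Submodule.finrank_map_add_finrank_map_le _ _ (sup_le h2 inf_le_left) le_sup_right

/-- With `D' = C2 + (D ∩ ker P_J̄)`, replacing `D` by `D'` does not decrease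
`dim P_J(D) − dim P_J̄(D)`:  `dim P_J(D) + dim P_J̄(D') ≤ dim P_J(D') + dim P_J̄(D)`. -/
theorem replace_D_does_not_decrease (hn : 0 < n) (C1 C2 D : Submodule F (Fin n → F))
    (h2 : C2 ≤ D) (h1 : D ≤ C1) (J : Finset (Fin n)) :
    Module.finrank F ↥(D.map (proj J))
        + Module.finrank F ↥((C2 ⊔ (D ⊓ LinearMap.ker (proj Jᶜ))).map (proj Jᶜ))
      ≤ Module.finrank F ↥((C2 ⊔ (D ⊓ LinearMap.ker (proj Jᶜ))).map (proj J))
        + Module.finrank F ↥(D.map (proj Jᶜ)) :=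
  replace_D_does_not_decrease_general C2 D h2 J
end

section
/- Let q be a prime power, n a positive integer, and C2 ⊆ C1 ⊆ F_q^n nested F_q-linear codes, and let J ⊆ {1,…,n} with complement J̄. Then dim P̃_J(ker P̃_J̄) = dim P_J(C2 + (C1 ∩ ker P_J̄)) − dim P_J(C2); equivalently, dim P̃_J(ker P̃_J̄) + dim P_J(C2) = dim P_J(C2 + (C1 ∩ ker P_J̄)). -/
/-! Write `N = C2 + (C1 ∩ ker P_J̄)`. Since `C2 ≤ C1`, the modular law turns the kernel of
`P̃_J̄`, the classes of `x ∈ C1 ∩ (C2 + ker P_J̄)`, into `N / C2`; the induced map `P̃_J` sends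
`N / C2` onto `P_J(N) / P_J(C2)`, whose dimension is `dim P_J(N) - dim P_J(C2)`. -/

set_option autoImplicit false

open Submodule Module

variable {F : Type*} [Field F] [Fintype F] {n : ℕ}

namespace LinearMap

variable {R V W : Type*} [Ring R] [AddCommGroup V] [Module R V] [AddCommGroup W] [Module R W]

noncomputable def subquotientMap (f : V →ₗ[R] W) (C1 C2 : Submodule R V) :
    (↥C1 ⧸ C2.comap C1.subtype) →ₗ[R]
      (↥(C1.map f) ⧸ (C2.map f).comap (C1.map f).subtype) :=
  mapQ _ _ (codRestrict (C1.map f) (f.comp C1.subtype) (fun x => mem_map_of_mem x.2))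
    -- the `show` gives the auxiliary proof the type `mapQ` expects, so that `ker_mapQ` rewrites
    (show C2.comap C1.subtype ≤ _ from fun _ hx => mem_map_of_mem hx)

variable (f : V →ₗ[R] W) {C1 C2 : Submodule R V}

theorem ker_subquotientMap (h : C2 ≤ C1) :
    ker (f.subquotientMap C1 C2)
      = ((C2 ⊔ C1 ⊓ ker f).comap C1.subtype).map (C2.comap C1.subtype).mkQ := by
  rw [subquotientMap, ker_mapQ, ← comap_comp, subtype_comp_codRestrict, inf_comm,
    ← sup_inf_assoc_of_le _ h, comap_inf, comap_subtype_self, inf_top_eq, ← comap_map_eq,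
    comap_comp]

theorem map_subquotientMap_map_mkQ {N : Submodule R V} (hN : N ≤ C1) :
    ((N.comap C1.subtype).map (C2.comap C1.subtype).mkQ).map (f.subquotientMap C1 C2)
      = ((N.map f).comap (C1.map f).subtype).map ((C2.map f).comap (C1.map f).subtype).mkQ := by
  rw [← map_comp, subquotientMap, mapQ_mkQ, map_comp]
  congr 1
  apply map_injective_of_injective (C1.map f).injective_subtype
  rw [← map_comp, subtype_comp_codRestrict, map_comp, map_comap_subtype, inf_eq_right.mpr hN,
    map_comap_subtype, inf_eq_right.mpr (map_mono hN)]

end LinearMap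

namespace Submodule

variable {K M : Type*} [DivisionRing K] [AddCommGroup M] [Module K M]

theorem finrank_map_mkQ_add_finrank {A B : Submodule K M} [FiniteDimensional K B] (hAB : A ≤ B) :
    finrank K (B.map A.mkQ) + finrank K A = finrank K B := by
  have := (A.mkQ.domRestrict B).finrank_range_add_finrank_ker
  rwa [LinearMap.range_domRestrict, LinearMap.ker_domRestrict, ker_mkQ,
    (comapSubtypeEquivOfLe hAB).finrank_eq] at this

theorem finrank_map_mkQ_comap_subtype_add_finrank {A B U : Submodule K M} [FiniteDimensional K U]
    (hAB : A ≤ B) (hBU : B ≤ U) :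
    finrank K ((B.comap U.subtype).map (A.comap U.subtype).mkQ) + finrank K A = finrank K B := by
  rw [← (comapSubtypeEquivOfLe (hAB.trans hBU)).finrank_eq,
    finrank_map_mkQ_add_finrank (comap_mono hAB), (comapSubtypeEquivOfLe hBU).finrank_eq]

end Submodule

theorem dim_image_ker_ptilde_eq_general (C1 C2 : Submodule F (Fin n → F))
    (h : C2 ≤ C1) (J : Finset (Fin n)) :
    Module.finrank F ↥((LinearMap.ker (ptilde C1 C2 Jᶜ)).map (ptilde C1 C2 J))
        + Module.finrank F ↥(C2.map (proj J))
      = Module.finrank F ↥((C2 ⊔ (C1 ⊓ LinearMap.ker (proj Jᶜ))).map (proj J)) := by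
  have hN : C2 ⊔ C1 ⊓ LinearMap.ker (proj Jᶜ) ≤ C1 := sup_le h inf_le_left
  have hP (K : Finset (Fin n)) : ptilde C1 C2 K = (proj K).subquotientMap C1 C2 := rfl
  rw [hP, hP, LinearMap.ker_subquotientMap _ h, LinearMap.map_subquotientMap_map_mkQ _ hN]
  exact finrank_map_mkQ_comap_subtype_add_finrank (map_mono le_sup_left) (map_mono hN)

/-- `dim P̃_J(ker P̃_J̄) + dim P_J(C2) = dim P_J(C2 + (C1 ∩ ker P_J̄))`. -/
theorem dim_image_ker_ptilde_eq (hn : 0 < n) (C1 C2 : Submodule F (Fin n → F))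
    (h : C2 ≤ C1) (J : Finset (Fin n)) :
    Module.finrank F ↥((LinearMap.ker (ptilde C1 C2 Jᶜ)).map (ptilde C1 C2 J))
        + Module.finrank F ↥(C2.map (proj J))
      = Module.finrank F ↥((C2 ⊔ (C1 ⊓ LinearMap.ker (proj Jᶜ))).map (proj J)) :=
  dim_image_ker_ptilde_eq_general C1 C2 h J
end
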